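/- Let R be a finite commutative Frobenius ring, C₁, …, C_m self-dual linear codes of length n over R, and A a quasi-orthogonal m × m (square) matrix over R. Then C = [C₁,…,C_m]A is a self-dual code of length nm over R. -/

import Mathlib

open Matrix BigOperators

variable {R : Type*}

def FRR [CommRing R] {m l : ℕ} (A : Matrix (Fin m) (Fin l) R) : Prop :=
  ∀ b : Fin m → R, Matrix.vecMul b A = 0 → b = 0

def perpCode [CommRing R] {N : ℕ} (C : Submodule R (Fin N → R)) : Submodule R (Fin N → R) where
  carrier := {x | ∀ c ∈ C, x ⬝ᵥ c = 0}
  add_mem' := by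
    intro a b ha hb c hc
    simp [add_dotProduct, ha c hc, hb c hc]
  zero_mem' := by
    intro c hc
    simp
  smul_mem' := by
    intro r x hx c hc
    simp [smul_dotProduct, hx c hc]

def IsFrobenius (R : Type*) [CommRing R] : Prop :=
  ∀ (N : ℕ) (C : Submodule R (Fin N → R)), perpCode (perpCode C) = C

def wtv [Zero R] [DecidableEq R] {n : ℕ} (v : Fin n → R) : ℕ :=
  (Finset.univ.filter fun i => v i ≠ 0).card

open scoped Classical in
noncomputable def minDistW [CommRing R] (w : R → ℕ) {n : ℕ} (C : Set (Fin n → R)) : ℕ :=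
  if ∃ x ∈ C, ∃ y ∈ C, x ≠ y then
    sInf {d | ∃ x ∈ C, ∃ y ∈ C, x ≠ y ∧ (∑ i, w (x i - y i)) = d}
  else n + 1

noncomputable def dHv [CommRing R] [DecidableEq R] {n : ℕ} (C : Set (Fin n → R)) : ℕ :=
  minDistW (fun r => if r = 0 then 0 else 1) C

open scoped Classical in
noncomputable def minDistWM [CommRing R] (w : R → ℕ) {n l : ℕ}
    (C : Set (Matrix (Fin n) (Fin l) R)) : ℕ :=
  if ∃ x ∈ C, ∃ y ∈ C, x ≠ y then
    sInf {d | ∃ x ∈ C, ∃ y ∈ C, x ≠ y ∧ (∑ i, ∑ j, w (x i j - y i j)) = d}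
  else n * l + 1

noncomputable def dHM [CommRing R] [DecidableEq R] {n l : ℕ} (C : Set (Matrix (Fin n) (Fin l) R)) : ℕ :=
  minDistWM (fun r => if r = 0 then 0 else 1) C

def MPC [CommRing R] {n m l : ℕ} (C : Fin m → Set (Fin n → R)) (A : Matrix (Fin m) (Fin l) R) :
    Set (Matrix (Fin n) (Fin l) R) :=
  {x | ∃ c : Fin m → Fin n → R, (∀ j, c j ∈ C j) ∧ x = Matrix.of fun i k => ∑ j, c j i * A j k}

def dualM [CommRing R] {n l : ℕ} (C : Set (Matrix (Fin n) (Fin l) R)) : Set (Matrix (Fin n) (Fin l) R) :=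
  {x | ∀ c ∈ C, ∑ i, ∑ j, x i j * c i j = 0}

theorem mem_perpCode [CommRing R] {N : ℕ} {C : Submodule R (Fin N → R)}
    {x : Fin N → R} : x ∈ perpCode C ↔ ∀ c ∈ C, x ⬝ᵥ c = 0 := Iff.rfl

def dualV [CommRing R] {n : ℕ} (C : Set (Fin n → R)) : Set (Fin n → R) :=
  {x | ∀ c ∈ C, x ⬝ᵥ c = 0}


theorem stmt14 [CommRing R] [Fintype R] (hFrob : IsFrobenius R)
    {n m : ℕ}
    (C : Fin m → Submodule R (Fin n → R))
    (hsd : ∀ j, perpCode (C j) = C j)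
    (A : Matrix (Fin m) (Fin m) R)
    (hqo1 : ∀ i j, i ≠ j → A i ⬝ᵥ A j = 0)
    (hqo2 : ∀ i, IsUnit (A i ⬝ᵥ A i)) :
    dualM (MPC (fun j => (C j : Set (Fin n → R))) A) =
      MPC (fun j => (C j : Set (Fin n → R))) A := by
  classical
  set u : Fin m → R := fun j => A j ⬝ᵥ A j with hu
  have hAAt : A * Aᵀ = Matrix.diagonal u := by
    ext i j
    by_cases h : i = j
    · subst h
      simp [Matrix.mul_apply, Matrix.diagonal, dotProduct, u]
    · simp only [Matrix.mul_apply, Matrix.transpose_apply, Matrix.diagonal_apply_ne _ h]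
      simpa [dotProduct] using hqo1 i j h
  have hdet : IsUnit A.det := by
    have h1 : A.det * A.det = ∏ j, u j := by
      have h := congrArg Matrix.det hAAt
      rwa [Matrix.det_mul, Matrix.det_transpose, Matrix.det_diagonal] at h
    have h2 : IsUnit (A.det * A.det) := by
      rw [h1]
      exact Finset.univ.prod_induction _ IsUnit (fun a b => IsUnit.mul) isUnit_one
        (fun j _ => hqo2 j)
    exact isUnit_of_mul_isUnit_left h2
  have hBA : A⁻¹ * A = 1 := Matrix.nonsing_inv_mul A hdet
  -- key computation
  have key : ∀ c d : Fin m → Fin n → R,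
      (∑ i, ∑ k, (∑ j, c j i * A j k) * (∑ j, d j i * A j k))
        = ∑ j, (∑ i, d j i * c j i) * u j := by
    intro c d
    set Cm : Matrix (Fin n) (Fin m) R := Matrix.of fun i j => c j i with hCm
    set Dm : Matrix (Fin n) (Fin m) R := Matrix.of fun i j => d j i with hDm
    have h1 : (∑ i, ∑ k, (∑ j, c j i * A j k) * (∑ j, d j i * A j k))
        = Matrix.trace ((Cm * A) * (Dm * A)ᵀ) := by
      simp [Matrix.trace, Matrix.diag, Matrix.mul_apply, Cm, Dm, mul_comm]
    have h2 : (Cm * A) * (Dm * A)ᵀ = Cm * Matrix.diagonal u * Dmᵀ := by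
      rw [Matrix.transpose_mul, ← Matrix.mul_assoc, Matrix.mul_assoc Cm A Aᵀ, hAAt]
    rw [h1, h2, Matrix.trace_mul_comm]
    have h3 : Dmᵀ * (Cm * Matrix.diagonal u) = (Dmᵀ * Cm) * Matrix.diagonal u := by
      rw [Matrix.mul_assoc]
    rw [h3]
    have h4 : ∀ j, ((Dmᵀ * Cm) * Matrix.diagonal u) j j = (∑ i, d j i * c j i) * u j := by
      intro j
      rw [Matrix.mul_diagonal]
      simp [Matrix.mul_apply, Cm, Dm]
    simp [Matrix.trace, Matrix.diag, h4]
  apply Set.Subset.antisymm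
  · -- dualM (MPC ...) ⊆ MPC ...
    intro x hx
    set c : Fin m → Fin n → R := fun j i => (x * A⁻¹) i j with hc
    have hxeq : x = Matrix.of fun i k => ∑ j, c j i * A j k := by
      ext i k
      have : (∑ j, c j i * A j k) = (x * A⁻¹ * A) i k := by
        simp [Matrix.mul_apply, c]
      rw [Matrix.of_apply, this, Matrix.mul_assoc, hBA, Matrix.mul_one]
    refine ⟨c, fun j => ?_, hxeq⟩
    show c j ∈ (C j : Set (Fin n → R))
    rw [SetLike.mem_coe, ← hsd j, mem_perpCode]
    intro d hd
    set d' : Fin m → Fin n → R := fun j' => if j' = j then d else 0 with hd'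
    have hy : (Matrix.of fun i k => ∑ j', d' j' i * A j' k : Matrix (Fin n) (Fin m) R)
        ∈ MPC (fun j => (C j : Set (Fin n → R))) A := by
      refine ⟨d', fun j' => ?_, rfl⟩
      by_cases h : j' = j
      · subst h; simpa [d'] using hd
      · simpa [d', h] using (C j').zero_mem
    have h0 := hx _ hy
    rw [hxeq] at h0
    have h0' : (∑ j', (∑ i, d' j' i * c j' i) * u j') = 0 := by
      rw [← key c d']
      simp only [Matrix.of_apply] at h0; exact h0
    have hsingle : (∑ j', (∑ i, d' j' i * c j' i) * u j')
        = (∑ i, d i * c j i) * u j := by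
      rw [Finset.sum_eq_single j]
      · simp [d']
      · intro b _ hb
        simp [d', hb]
      · simp
    rw [hsingle] at h0'
    have hz : (∑ i, d i * c j i) = 0 := by
      rcases hqo2 j with ⟨v, hv⟩
      have huj : u j = (↑v : R) := by rw [hu]; exact hv.symm
      rw [huj] at h0'
      exact (Units.mul_left_eq_zero v).mp h0'
    have : c j ⬝ᵥ d = ∑ i, d i * c j i := by
      simp [dotProduct, mul_comm]
    rw [this, hz]
  · -- MPC ... ⊆ dualM (MPC ...)
    rintro x ⟨c, hcmem, rfl⟩ y ⟨d, hdmem, rfl⟩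
    have h := key d c
    simp only [Matrix.of_apply]
    rw [show (∑ i, ∑ k, (∑ j, c j i * A j k) * (∑ j, d j i * A j k))
        = ∑ j, (∑ i, d j i * c j i) * u j from key c d]
    apply Finset.sum_eq_zero
    intro j _
    have hdj : d j ∈ perpCode (C j) := by rw [hsd j]; exact hdmem j
    have hdj' := mem_perpCode.mp hdj (c j) (hcmem j)
    have : (∑ i, d j i * c j i) = d j ⬝ᵥ c j := by simp [dotProduct]
    rw [this, hdj']
    ring
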